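/- Let D > 0 and Q = [a,b,c] a binary quadratic form of discriminant D with a > 0, and write p(z) = -(a|z|² + bx + c)/y for z = x+iy ∈ ℍ. Then for z not on the geodesic c_Q, one has -2·𝟙_Q(z)·(arctan(√D/(-p(z))) + π/2) = arctan(√D/|p(z)|) - arccot(-p(z)/√D), where 𝟙_Q is the characteristic function of the bounded component of ℍ \ c_Q. In particular the left-hand side, extended by 0 on c_Q, differs from the real-analytic function -arccot(-p(z)/√D) by the continuous function arctan(√D/|p(z)|) = arcsin(√(D/(D + p(z)²))). -/

import Mathlib

open Real Complex

/-- `p(z) = -(a|z|² + bx + c)/y` for `z = x + iy` in the upper half-plane. -/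
noncomputable def pQ (a b c : ℤ) (z : ℂ) : ℝ :=
  -((a : ℝ) * Complex.normSq z + b * z.re + c) / z.im

/-- `arccot` with values in `(0, π)`, real analytic on all of `ℝ`. -/
noncomputable def arccot (x : ℝ) : ℝ := π / 2 - Real.arctan x

/-! Both identities come from `arctan x⁻¹ = π/2 - arctan x` for `x > 0`: off the geodesic,
`arccot (-p/√D)` equals `arctan (√D/|p|)` when `p < 0` and `π - arctan (√D/p)` when `p > 0`. -/

theorem arccot_eq_arctan_inv {x : ℝ} (hx : 0 < x) : arccot x = Real.arctan x⁻¹ := by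
  rw [arccot, Real.arctan_inv_of_pos hx]

theorem arccot_neg (x : ℝ) : arccot (-x) = π - arccot x := by
  rw [arccot, arccot, Real.arctan_neg]
  ring

theorem arctan_div_abs_sub_arccot_neg_div {s p : ℝ} (hs : 0 < s) (hp : p ≠ 0) :
    Real.arctan (s / |p|) - arccot (-p / s)
      = -2 * (if 0 < p then 1 else 0) * (Real.arctan (s / -p) + π / 2) := by
  rcases hp.lt_or_gt with hneg | hpos
  · have hcot : arccot (-p / s) = Real.arctan (s / -p) := by
      rw [arccot_eq_arctan_inv (div_pos (neg_pos.mpr hneg) hs), inv_div]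
    rw [if_neg hneg.not_gt, abs_of_neg hneg, hcot]
    ring
  · have hcot : arccot (-p / s) = π - Real.arctan (s / p) := by
      rw [neg_div, arccot_neg, arccot_eq_arctan_inv (div_pos hpos hs), inv_div]
    rw [if_pos hpos, abs_of_pos hpos, hcot, div_neg, Real.arctan_neg]
    ring

theorem arctan_div_eq_arcsin_sqrt {s q : ℝ} (hs : 0 < s) (hq : 0 < q) :
    Real.arctan (s / q) = Real.arcsin (Real.sqrt (s ^ 2 / (s ^ 2 + q ^ 2))) := by
  have hnorm : Real.sqrt (1 + (s / q) ^ 2) = Real.sqrt (s ^ 2 + q ^ 2) / q := by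
    rw [Real.sqrt_eq_iff_mul_self_eq_of_pos (by positivity), div_mul_div_comm,
      Real.mul_self_sqrt (by positivity)]
    field_simp
    ring
  rw [Real.arctan_eq_arcsin, hnorm, Real.sqrt_div (sq_nonneg s), Real.sqrt_sq hs.le]
  field_simp

theorem jump_decomposition_general (a b c : ℤ) (hD : 0 < b ^ 2 - 4 * a * c)
    (z : ℂ) (hp : pQ a b c z ≠ 0) :
    (-2 : ℝ) * (if 0 < pQ a b c z then 1 else 0) *
        (Real.arctan (Real.sqrt ((b : ℝ) ^ 2 - 4 * a * c) / (-(pQ a b c z))) + π / 2)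
      = Real.arctan (Real.sqrt ((b : ℝ) ^ 2 - 4 * a * c) / |pQ a b c z|)
        - arccot (-(pQ a b c z) / Real.sqrt ((b : ℝ) ^ 2 - 4 * a * c))
    ∧ Real.arctan (Real.sqrt ((b : ℝ) ^ 2 - 4 * a * c) / |pQ a b c z|)
      = Real.arcsin (Real.sqrt (((b : ℝ) ^ 2 - 4 * a * c) /
          (((b : ℝ) ^ 2 - 4 * a * c) + (pQ a b c z) ^ 2))) := by
  have hDpos : (0 : ℝ) < (b : ℝ) ^ 2 - 4 * a * c := by exact_mod_cast hD
  have hs : 0 < Real.sqrt ((b : ℝ) ^ 2 - 4 * a * c) := Real.sqrt_pos.mpr hDpos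
  refine ⟨(arctan_div_abs_sub_arccot_neg_div hs hp).symm, ?_⟩
  rw [arctan_div_eq_arcsin_sqrt hs (abs_pos.mpr hp), Real.sq_sqrt hDpos.le, sq_abs]

/-- For a form `[a,b,c]` of discriminant `D > 0` with `a > 0` and `z` off the geodesic
(`p(z) ≠ 0`), writing `𝟙_Q(z) = 1` iff `p(z) > 0` (the bounded component):
`-2 𝟙_Q(z)(arctan(√D/(-p)) + π/2) = arctan(√D/|p|) - arccot(-p/√D)`, and
`arctan(√D/|p|) = arcsin(√(D/(D+p²)))`. -/
theorem jump_decomposition (a b c : ℤ) (ha : 0 < a) (hD : 0 < b ^ 2 - 4 * a * c)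
    (z : ℂ) (hz : 0 < z.im) (hp : pQ a b c z ≠ 0) :
    (-2 : ℝ) * (if 0 < pQ a b c z then 1 else 0) *
        (Real.arctan (Real.sqrt ((b : ℝ) ^ 2 - 4 * a * c) / (-(pQ a b c z))) + π / 2)
      = Real.arctan (Real.sqrt ((b : ℝ) ^ 2 - 4 * a * c) / |pQ a b c z|)
        - arccot (-(pQ a b c z) / Real.sqrt ((b : ℝ) ^ 2 - 4 * a * c))
    ∧ Real.arctan (Real.sqrt ((b : ℝ) ^ 2 - 4 * a * c) / |pQ a b c z|)
      = Real.arcsin (Real.sqrt (((b : ℝ) ^ 2 - 4 * a * c) /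
          (((b : ℝ) ^ 2 - 4 * a * c) + (pQ a b c z) ^ 2))) :=
  jump_decomposition_general a b c hD z hp
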